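/- Any binary phylogenetic network can be generated from the single-leaf network by a finite sequence of speciation events, n-type (HGT) reticulation events, and extinction events (removal of a leaf followed by suppression of its degree-2 parent). -/

import Mathlib

/-- A (directed) phylogenetic-network-like graph on a finite set of
natural-number labelled vertices. -/
structure PNet where
  verts : Finset ℕ
  adj : ℕ → ℕ → Prop
  adjDec : DecidableRel adj
  adj_mem : ∀ u v, adj u v → u ∈ verts ∧ v ∈ verts

attribute [instance] PNet.adjDec

namespace PNet

/-- In-degree of a vertex. -/
def indeg (N : PNet) (v : ℕ) : ℕ := (N.verts.filter fun u => N.adj u v).card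

/-- Out-degree of a vertex. -/
def outdeg (N : PNet) (v : ℕ) : ℕ := (N.verts.filter fun w => N.adj v w).card

/-- A leaf is a vertex of out-degree 0. -/
def IsLeaf (N : PNet) (v : ℕ) : Prop := v ∈ N.verts ∧ N.outdeg v = 0

/-- A reticulation node is a vertex of in-degree 2. -/
def IsRetic (N : PNet) (v : ℕ) : Prop := v ∈ N.verts ∧ N.indeg v = 2

/-- A root is a vertex of in-degree 0. -/
def IsRoot (N : PNet) (v : ℕ) : Prop := v ∈ N.verts ∧ N.indeg v = 0

/-- The digraph is acyclic. -/
def Acyclic (N : PNet) : Prop := ∀ v, ¬ Relation.TransGen N.adj v v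

/-- A binary (rooted) phylogenetic network: acyclic, a root of in-degree 0 and
out-degree 2 from which all vertices are reachable, and every other vertex is a
tree node (in 1, out 2), a reticulation node (in 2, out 1) or a leaf (in 1, out 0). -/
def IsBinary (N : PNet) : Prop :=
  N.Acyclic ∧ ∃ ρ, N.IsRoot ρ ∧ N.outdeg ρ = 2 ∧
    (∀ v ∈ N.verts, Relation.ReflTransGen N.adj ρ v) ∧
    (∀ v ∈ N.verts, v ≠ ρ →
      (N.indeg v = 1 ∧ N.outdeg v = 2) ∨ (N.indeg v = 2 ∧ N.outdeg v = 1) ∨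
      (N.indeg v = 1 ∧ N.outdeg v = 0))

/-- Tree-child: every internal node has a child that is not a reticulation. -/
def TreeChild (N : PNet) : Prop :=
  ∀ v ∈ N.verts, N.outdeg v ≠ 0 → ∃ c, N.adj v c ∧ N.indeg c ≠ 2

/-- Stack-free: no edge joins two reticulation nodes. -/
def StackFree (N : PNet) : Prop :=
  ∀ u v, N.adj u v → ¬ (N.indeg u = 2 ∧ N.indeg v = 2)

end PNet

namespace PNet

/-- The network consisting of a single leaf (one vertex, no edges). -/
def SingleLeaf (N : PNet) : Prop := ∃ v, N.verts = {v} ∧ ∀ u w, ¬ N.adj u w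

/-- Speciation event: a leaf `x` is replaced by a tree node with two new leaf
children `a` and `b`. -/
def Speciation (N N' : PNet) : Prop :=
  ∃ x a b, N.IsLeaf x ∧ a ∉ N.verts ∧ b ∉ N.verts ∧ a ≠ b ∧
    N'.verts = insert a (insert b N.verts) ∧
    ∀ u v, N'.adj u v ↔ (N.adj u v ∨ (u = x ∧ v = a) ∨ (u = x ∧ v = b))

/-- y-type merging event: two distinct leaves `x` and `y` (with distinct
parents) are glued into a reticulation node with in-edges from the former
parents of `x` and `y` and a single new leaf child `z`. -/
def YMerge (N N' : PNet) : Prop :=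
  ∃ x y z px py, x ≠ y ∧ N.IsLeaf x ∧ N.IsLeaf y ∧ z ∉ N.verts ∧
    N.adj px x ∧ N.adj py y ∧ px ≠ py ∧
    N'.verts = insert z (N.verts \ {y}) ∧
    ∀ u v, N'.adj u v ↔
      ((N.adj u v ∧ v ≠ y) ∨ (u = py ∧ v = x) ∨ (u = x ∧ v = z))

/-- n-type (HGT) reticulation event: subdivide the pendant edges above two
distinct leaves `x` and `y` with new nodes `u₀` and `v₀` and add the arc
`(u₀, v₀)`, making `v₀` a reticulation node; `x` and `y` remain leaves. -/
def HGT (N N' : PNet) : Prop :=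
  ∃ x y u₀ v₀ px py, x ≠ y ∧ N.IsLeaf x ∧ N.IsLeaf y ∧
    N.adj px x ∧ N.adj py y ∧
    u₀ ∉ N.verts ∧ v₀ ∉ N.verts ∧ u₀ ≠ v₀ ∧
    N'.verts = insert u₀ (insert v₀ N.verts) ∧
    ∀ a b, N'.adj a b ↔
      ((N.adj a b ∧ b ≠ x ∧ b ≠ y) ∨ (a = px ∧ b = u₀) ∨ (a = py ∧ b = v₀) ∨
        (a = u₀ ∧ b = x) ∨ (a = v₀ ∧ b = y) ∨ (a = u₀ ∧ b = v₀))

/-- m-type hybrid-speciation event: two distinct leaves `x` and `y` each become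
tree nodes, with new leaf children `x'` resp. `y'` and with edges into a shared
new reticulation node `w`, which has a single new leaf child `z`. -/
def MType (N N' : PNet) : Prop :=
  ∃ x y x' y' w z, x ≠ y ∧ N.IsLeaf x ∧ N.IsLeaf y ∧
    x' ∉ N.verts ∧ y' ∉ N.verts ∧ w ∉ N.verts ∧ z ∉ N.verts ∧
    x' ≠ y' ∧ x' ≠ w ∧ x' ≠ z ∧ y' ≠ w ∧ y' ≠ z ∧ w ≠ z ∧
    N'.verts = insert x' (insert y' (insert w (insert z N.verts))) ∧
    ∀ a b, N'.adj a b ↔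
      (N.adj a b ∨ (a = x ∧ b = x') ∨ (a = x ∧ b = w) ∨
        (a = y ∧ b = y') ∨ (a = y ∧ b = w) ∨ (a = w ∧ b = z))

/-- Extinction event: delete a leaf `x` and suppress its resulting degree-two
parent `p` (when `p` is not the root). -/
def Extinct (N N' : PNet) : Prop :=
  ∃ x p c, N.IsLeaf x ∧ N.adj p x ∧ N.adj p c ∧ c ≠ x ∧
    ((N.indeg p = 0 ∧ N'.verts = N.verts \ {x} ∧
        ∀ u v, N'.adj u v ↔ (N.adj u v ∧ v ≠ x)) ∨
     (∃ q, N.adj q p ∧ N'.verts = N.verts \ {x, p} ∧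
        ∀ u v, N'.adj u v ↔
          ((N.adj u v ∧ u ≠ p ∧ v ≠ p ∧ v ≠ x) ∨ (u = q ∧ v = c))))

/-- Isomorphism of (leaf-unlabelled) network topologies. -/
def Iso (M N : PNet) : Prop :=
  ∃ f : ℕ → ℕ, Set.BijOn f ↑M.verts ↑N.verts ∧
    ∀ u v, u ∈ M.verts → v ∈ M.verts → (M.adj u v ↔ N.adj (f u) (f v))

end PNet

/-! Induct on the number of internal vertices and look at a lowest internal vertex `w`, all
of whose children are leaves. If `w` has two children, they form a cherry: deleting it leaves
a binary network with fewer internal vertices (or the single leaf, when `w` is the root), from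
which `N` arises by one speciation. Otherwise `w` is a reticulation with parents `p₁`, `p₂`
and leaf child `z`. Deleting `w`, hanging a fresh leaf `ℓ` below `p₁` and moving `z` below
`p₂` gives a smaller binary network; an HGT event from the edge above `ℓ` to the edge above
`z` recreates `w`, and the extinction of `ℓ` suppresses the extra subdivision vertex above
`ℓ`. This rebuilds `N` exactly, so the isomorphism is the identity. -/

namespace PNet

variable {N P : PNet} {u v w a b c p₁ p₂ z ℓ s ρ : ℕ}

theorem mem_verts_of_adj_left (h : N.adj u v) : u ∈ N.verts := (N.adj_mem u v h).1

theorem mem_verts_of_adj_right (h : N.adj u v) : v ∈ N.verts := (N.adj_mem u v h).2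

def parents (N : PNet) (v : ℕ) : Finset ℕ := N.verts.filter fun u => N.adj u v

def children (N : PNet) (v : ℕ) : Finset ℕ := N.verts.filter fun w => N.adj v w

@[simp]
theorem mem_parents : u ∈ N.parents v ↔ N.adj u v :=
  Finset.mem_filter.trans (and_iff_right_of_imp mem_verts_of_adj_left)

@[simp]
theorem mem_children : w ∈ N.children v ↔ N.adj v w :=
  Finset.mem_filter.trans (and_iff_right_of_imp mem_verts_of_adj_right)

theorem indeg_eq_card_parents : N.indeg v = (N.parents v).card := rfl

theorem outdeg_eq_card_children : N.outdeg v = (N.children v).card := rfl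

theorem indeg_eq_zero_iff : N.indeg v = 0 ↔ ∀ u, ¬ N.adj u v := by
  simp [indeg_eq_card_parents, Finset.eq_empty_iff_forall_notMem]

theorem outdeg_eq_zero_iff : N.outdeg v = 0 ↔ ∀ w, ¬ N.adj v w := by
  simp [outdeg_eq_card_children, Finset.eq_empty_iff_forall_notMem]

theorem indeg_eq_one_iff : N.indeg v = 1 ↔ ∃ p, ∀ u, N.adj u v ↔ u = p := by
  simp [indeg_eq_card_parents, Finset.card_eq_one, Finset.ext_iff]

theorem outdeg_eq_one_iff : N.outdeg v = 1 ↔ ∃ c, ∀ w, N.adj v w ↔ w = c := by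
  simp [outdeg_eq_card_children, Finset.card_eq_one, Finset.ext_iff]

theorem indeg_eq_two_iff :
    N.indeg v = 2 ↔ ∃ p q, p ≠ q ∧ ∀ u, N.adj u v ↔ u = p ∨ u = q := by
  simp [indeg_eq_card_parents, Finset.card_eq_two, Finset.ext_iff]

theorem outdeg_eq_two_iff :
    N.outdeg v = 2 ↔ ∃ a b, a ≠ b ∧ ∀ w, N.adj v w ↔ w = a ∨ w = b := by
  simp [outdeg_eq_card_children, Finset.card_eq_two, Finset.ext_iff]

theorem indeg_congr (h : ∀ u, P.adj u v ↔ N.adj u v) : P.indeg v = N.indeg v := by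
  rw [indeg_eq_card_parents, indeg_eq_card_parents]
  congr 1
  ext u
  simp [h]

theorem outdeg_congr (h : ∀ w, P.adj v w ↔ N.adj v w) : P.outdeg v = N.outdeg v := by
  rw [outdeg_eq_card_children, outdeg_eq_card_children]
  congr 1
  ext w
  simp [h]

theorem outdeg_eq_of_replace_child (hvw : N.adj v w) (hvℓ : ¬ N.adj v ℓ)
    (h : ∀ c, P.adj v c ↔ (N.adj v c ∧ c ≠ w) ∨ c = ℓ) : P.outdeg v = N.outdeg v := by
  have hch : P.children v = insert ℓ ((N.children v).erase w) := by
    ext c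
    simp only [mem_children, h, Finset.mem_insert, Finset.mem_erase]
    tauto
  have hpos : 0 < (N.children v).card := Finset.card_pos.2 ⟨w, mem_children.2 hvw⟩
  rw [outdeg_eq_card_children, outdeg_eq_card_children, hch,
    Finset.card_insert_of_notMem (by simp [hvℓ]), Finset.card_erase_of_mem (by simpa)]
  omega

theorem Acyclic.ne_of_adj (hN : N.Acyclic) (h : N.adj u v) : u ≠ v := by
  rintro rfl
  exact hN u (.single h)

/-- A cycle of `P` passes through no sink of `P`, so all its edges are edges of `N`. -/
theorem Acyclic.of_adj (hN : N.Acyclic)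
    (h : ∀ u v, P.adj u v → N.adj u v ∨ ∀ w, ¬ P.adj v w) : P.Acyclic := by
  have key : ∀ u v, Relation.TransGen P.adj u v → (∃ w, P.adj v w) →
      Relation.TransGen N.adj u v := by
    intro u v huv hv
    induction huv with
    | single h' => exact .single ((h _ _ h').resolve_right (not_forall_not.2 hv))
    | tail _ h' ih => exact .tail (ih ⟨_, h'⟩) ((h _ _ h').resolve_right (not_forall_not.2 hv))
  intro v hv
  obtain ⟨w, hw, -⟩ := Relation.TransGen.head'_iff.1 hv
  exact hN v (key v v hv ⟨w, hw⟩)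

theorem Acyclic.exists_lowest_internal (hN : N.Acyclic) (hv : v ∈ N.verts)
    (hvo : N.outdeg v ≠ 0) :
    ∃ w ∈ N.verts, N.outdeg w ≠ 0 ∧ ∀ c, N.adj w c → N.outdeg c = 0 := by
  have : IsStrictOrder ℕ (flip (Relation.TransGen N.adj)) :=
    { irrefl := hN, trans := fun _ _ _ h₁ h₂ => h₂.trans h₁ }
  let S : Set ℕ := {x | x ∈ N.verts ∧ N.outdeg x ≠ 0}
  have hwf := Set.wellFoundedOn_iff.1 <|
    (N.verts.finite_toSet.subset fun _ hx => hx.1 : S.Finite).wellFoundedOn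
      (r := flip (Relation.TransGen N.adj))
  obtain ⟨w, hwS, hmin⟩ := hwf.has_min S ⟨v, hv, hvo⟩
  refine ⟨w, hwS.1, hwS.2, fun c hc => ?_⟩
  by_contra hco
  have hcS : c ∈ S := ⟨mem_verts_of_adj_right hc, hco⟩
  exact hmin c hcS ⟨.single hc, hcS, hwS⟩

theorem reflTransGen_of_closed (S : ℕ → Prop) (hS : ∀ u w, N.adj u w → S u → S w)
    (hP : ∀ u w, N.adj u w → ¬ S w → P.adj u w)
    (h : Relation.ReflTransGen N.adj ρ v) (hv : ¬ S v) : Relation.ReflTransGen P.adj ρ v := by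
  induction h with
  | refl => exact .refl
  | tail _ huw ih => exact .tail (ih fun hu => hv (hS _ _ huw hu)) (hP _ _ huw hv)

structure IsBinaryAt (N : PNet) (ρ : ℕ) : Prop where
  acyclic : N.Acyclic
  isRoot : N.IsRoot ρ
  outdeg_root : N.outdeg ρ = 2
  reach : ∀ v ∈ N.verts, Relation.ReflTransGen N.adj ρ v
  degrees : ∀ v ∈ N.verts, v ≠ ρ →
    (N.indeg v = 1 ∧ N.outdeg v = 2) ∨ (N.indeg v = 2 ∧ N.outdeg v = 1) ∨
      (N.indeg v = 1 ∧ N.outdeg v = 0)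

theorem isBinary_iff : N.IsBinary ↔ ∃ ρ, N.IsBinaryAt ρ :=
  ⟨fun ⟨hac, ρ, hρ, h2, hr, hd⟩ => ⟨ρ, hac, hρ, h2, hr, hd⟩,
    fun ⟨ρ, hac, hρ, h2, hr, hd⟩ => ⟨hac, ρ, hρ, h2, hr, hd⟩⟩

theorem IsBinaryAt.adj_iff_of_adj_leaf (hN : N.IsBinaryAt ρ) (hwc : N.adj w c)
    (hc : N.outdeg c = 0) (u : ℕ) : N.adj u c ↔ u = w := by
  have hcρ : c ≠ ρ := by
    rintro rfl
    exact indeg_eq_zero_iff.1 hN.isRoot.2 w hwc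
  have hc1 : N.indeg c = 1 := by
    rcases hN.degrees c (mem_verts_of_adj_right hwc) hcρ with h | h | h <;> omega
  obtain ⟨p, hp⟩ := indeg_eq_one_iff.1 hc1
  rw [hp, (hp w).1 hwc]

def numInternal (N : PNet) : ℕ := (N.verts.filter fun v => N.outdeg v ≠ 0).card

def PrunesAt (P N : PNet) (ρ w : ℕ) : Prop :=
  ∀ v ∈ P.verts, (v ∈ N.verts ∧ v ≠ w ∧ P.indeg v = N.indeg v ∧ P.outdeg v = N.outdeg v) ∨
    (v ≠ ρ ∧ P.indeg v = 1 ∧ P.outdeg v = 0)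

theorem PrunesAt.isBinaryAt (h : P.PrunesAt N ρ w) (hN : N.IsBinaryAt ρ)
    (hac : P.Acyclic) (hρ : ρ ∈ P.verts)
    (hreach : ∀ v ∈ P.verts, Relation.ReflTransGen P.adj ρ v) : P.IsBinaryAt ρ := by
  obtain ⟨-, -, hin, hout⟩ : ρ ∈ N.verts ∧ ρ ≠ w ∧ P.indeg ρ = N.indeg ρ ∧
      P.outdeg ρ = N.outdeg ρ := (h ρ hρ).resolve_right fun h' => h'.1 rfl
  refine ⟨hac, ⟨hρ, hin.trans hN.isRoot.2⟩, hout.trans hN.outdeg_root, hreach,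
    fun v hv hvρ => ?_⟩
  rcases h v hv with ⟨hvN, -, hin, hout⟩ | ⟨-, hin, hout⟩
  · rw [hin, hout]
    exact hN.degrees v hvN hvρ
  · exact .inr (.inr ⟨hin, hout⟩)

theorem PrunesAt.numInternal_lt (h : P.PrunesAt N ρ w) (hw : w ∈ N.verts)
    (hwo : N.outdeg w ≠ 0) : P.numInternal < N.numInternal := by
  refine Finset.card_lt_card ((Finset.ssubset_iff_of_subset fun v hv => ?_).2
    ⟨w, Finset.mem_filter.2 ⟨hw, hwo⟩, fun hwP => ?_⟩)
  · rw [Finset.mem_filter] at hv ⊢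
    rcases h v hv.1 with ⟨hvN, -, -, hout⟩ | ⟨-, -, hout⟩
    · exact ⟨hvN, hout ▸ hv.2⟩
    · exact absurd hout hv.2
  · rw [Finset.mem_filter] at hwP
    rcases h w hwP.1 with ⟨-, hne, -⟩ | ⟨-, -, hout⟩
    · exact hne rfl
    · exact hwP.2 hout

@[simps]
def deleteVerts (N : PNet) (s : Finset ℕ) : PNet where
  verts := N.verts \ s
  adj u v := N.adj u v ∧ u ∉ s ∧ v ∉ s
  adjDec _ _ := inferInstance
  adj_mem _ _ h := ⟨Finset.mem_sdiff.2 ⟨mem_verts_of_adj_left h.1, h.2.1⟩,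
    Finset.mem_sdiff.2 ⟨mem_verts_of_adj_right h.1, h.2.2⟩⟩

structure IsCherry (N : PNet) (w a b : ℕ) : Prop where
  ne : a ≠ b
  adj_iff_child : ∀ c, N.adj w c ↔ c = a ∨ c = b
  adj_iff_left : ∀ u, N.adj u a ↔ u = w
  adj_iff_right : ∀ u, N.adj u b ↔ u = w
  leaf_left : ∀ c, ¬ N.adj a c
  leaf_right : ∀ c, ¬ N.adj b c

theorem IsBinaryAt.exists_isCherry (hN : N.IsBinaryAt ρ) (hwo : N.outdeg w = 2)
    (hlow : ∀ c, N.adj w c → N.outdeg c = 0) : ∃ a b, N.IsCherry w a b := by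
  obtain ⟨a, b, hab, hc⟩ := outdeg_eq_two_iff.1 hwo
  have ha : N.adj w a := (hc a).2 (.inl rfl)
  have hb : N.adj w b := (hc b).2 (.inr rfl)
  exact ⟨a, b, hab, hc, hN.adj_iff_of_adj_leaf ha (hlow a ha),
    hN.adj_iff_of_adj_leaf hb (hlow b hb), outdeg_eq_zero_iff.1 (hlow a ha),
    outdeg_eq_zero_iff.1 (hlow b hb)⟩

namespace IsCherry

theorem adj_left (h : N.IsCherry w a b) : N.adj w a := (h.adj_iff_left w).2 rfl

theorem adj_right (h : N.IsCherry w a b) : N.adj w b := (h.adj_iff_right w).2 rfl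

theorem ne_left (h : N.IsCherry w a b) : w ≠ a := by
  rintro rfl
  exact h.leaf_left w h.adj_left

theorem ne_right (h : N.IsCherry w a b) : w ≠ b := by
  rintro rfl
  exact h.leaf_right w h.adj_right

theorem speciation (h : N.IsCherry w a b) : Speciation (N.deleteVerts {a, b}) N := by
  have hmem := N.adj_mem
  have hwa := h.adj_left
  have hwb := h.adj_right
  have hwa' := h.ne_left
  have hwb' := h.ne_right
  obtain ⟨hab, hwc, ha, hb, ha₀, hb₀⟩ := h
  refine ⟨w, a, b, ⟨?_, outdeg_eq_zero_iff.2 ?_⟩, by simp, by simp, hab, ?_, ?_⟩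
  · grind [deleteVerts_verts]
  · grind [deleteVerts_adj]
  · ext
    grind [deleteVerts_verts]
  · grind [deleteVerts_adj]

theorem prunesAt (h : N.IsCherry w a b) (hN : N.IsBinaryAt ρ) (hwρ : w ≠ ρ) :
    (N.deleteVerts {a, b}).PrunesAt N ρ w := by
  have hw2 : N.outdeg w = 2 := outdeg_eq_two_iff.2 ⟨a, b, h.ne, h.adj_iff_child⟩
  have hw : w ∈ N.verts := mem_verts_of_adj_left h.adj_left
  obtain ⟨-, hwc, ha, hb, ha₀, hb₀⟩ := h
  intro v hv
  simp only [deleteVerts_verts, Finset.mem_sdiff, Finset.mem_insert, Finset.mem_singleton] at hv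
  have hin : (N.deleteVerts {a, b}).indeg v = N.indeg v :=
    indeg_congr fun u => by grind [deleteVerts_adj]
  by_cases hvw : v = w
  · subst v
    refine .inr ⟨hwρ, hin.trans ?_, outdeg_eq_zero_iff.2 fun c => by grind [deleteVerts_adj]⟩
    rcases hN.degrees w hw hwρ with h' | h' | h' <;> omega
  · exact .inl ⟨hv.1, hvw, hin, outdeg_congr fun c => by grind [deleteVerts_adj]⟩

theorem isBinaryAt_deleteVerts (h : N.IsCherry w a b) (hN : N.IsBinaryAt ρ) (hwρ : w ≠ ρ) :
    (N.deleteVerts {a, b}).IsBinaryAt ρ := by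
  have hρ := hN.isRoot
  rw [IsRoot, indeg_eq_zero_iff] at hρ
  have hwa := h.adj_left
  have hwb := h.adj_right
  refine (h.prunesAt hN hwρ).isBinaryAt hN (hN.acyclic.of_adj fun _ _ huv => .inl huv.1)
    ?_ fun v hv => ?_
  · obtain ⟨-, -, ha, hb, -, -⟩ := h
    grind [deleteVerts_verts]
  · simp only [deleteVerts_verts, Finset.mem_sdiff] at hv
    obtain ⟨-, -, -, -, ha₀, hb₀⟩ := h
    exact reflTransGen_of_closed (· ∈ ({a, b} : Finset ℕ)) (by grind)
      (by grind [deleteVerts_adj]) (hN.reach v hv.1) hv.2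

/-- When the cherry sits at the root, reachability from the root leaves nothing else. -/
theorem singleLeaf_deleteVerts (h : N.IsCherry ρ a b) (hN : N.IsBinaryAt ρ) :
    SingleLeaf (N.deleteVerts {a, b}) := by
  have hsub : ∀ v, Relation.ReflTransGen N.adj ρ v → v = ρ ∨ v = a ∨ v = b := fun v hv => by
    induction hv with
    | refl => exact .inl rfl
    | tail _ huv ih =>
      rcases ih with rfl | rfl | rfl
      · exact .inr ((h.adj_iff_child _).1 huv)
      · exact (h.leaf_left _ huv).elim
      · exact (h.leaf_right _ huv).elim
  have hρ := hN.isRoot.1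
  have hρa := h.ne_left
  have hρb := h.ne_right
  refine ⟨ρ, ?_, fun u v huv => ?_⟩
  · ext v
    have := fun hv => hsub v (hN.reach v hv)
    grind [deleteVerts_verts]
  · have := hsub u (hN.reach u (mem_verts_of_adj_left huv.1))
    have := hsub v (hN.reach v (mem_verts_of_adj_right huv.1))
    have := hN.acyclic.ne_of_adj huv.1
    grind [deleteVerts_adj]

end IsCherry

@[simps]
def graft (N : PNet) (hpc : N.adj p c) (s ℓ : ℕ) : PNet where
  verts := insert s (insert ℓ N.verts)
  adj u v :=
    (N.adj u v ∧ ¬(u = p ∧ v = c)) ∨ (u = p ∧ v = s) ∨ (u = s ∧ v = c) ∨ (u = s ∧ v = ℓ)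
  adjDec _ _ := inferInstance
  adj_mem u v := by
    have := mem_verts_of_adj_left hpc
    have := mem_verts_of_adj_right hpc
    rintro (⟨h, -⟩ | ⟨rfl, rfl⟩ | ⟨rfl, rfl⟩ | ⟨rfl, rfl⟩)
    · simp [mem_verts_of_adj_left h, mem_verts_of_adj_right h]
    all_goals simp [*]

theorem extinct_graft (hpc : N.adj p c) (hs : s ∉ N.verts) (hℓ : ℓ ∉ N.verts) (hsℓ : s ≠ ℓ) :
    Extinct (N.graft hpc s ℓ) N := by
  have hmem := N.adj_mem
  have := mem_verts_of_adj_left hpc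
  have := mem_verts_of_adj_right hpc
  refine ⟨ℓ, s, c, ⟨by simp, outdeg_eq_zero_iff.2 ?_⟩, by simp, by simp, by grind,
    .inr ⟨p, by simp, ?_, ?_⟩⟩
  · grind [graft_adj]
  · ext
    grind [graft_verts]
  · grind [graft_adj]

structure IsLeafRetic (N : PNet) (w p₁ p₂ z : ℕ) : Prop where
  ne : p₁ ≠ p₂
  adj_iff_parent : ∀ u, N.adj u w ↔ u = p₁ ∨ u = p₂
  adj_iff_child : ∀ c, N.adj w c ↔ c = z
  adj_iff_leaf : ∀ u, N.adj u z ↔ u = w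
  leaf : ∀ c, ¬ N.adj z c

theorem IsBinaryAt.exists_isLeafRetic (hN : N.IsBinaryAt ρ) (hwi : N.indeg w = 2)
    (hwo : N.outdeg w = 1) (hlow : ∀ c, N.adj w c → N.outdeg c = 0) :
    ∃ p₁ p₂ z, N.IsLeafRetic w p₁ p₂ z := by
  obtain ⟨p₁, p₂, hp, hpw⟩ := indeg_eq_two_iff.1 hwi
  obtain ⟨z, hz⟩ := outdeg_eq_one_iff.1 hwo
  have hwz : N.adj w z := (hz z).2 rfl
  exact ⟨p₁, p₂, z, hp, hpw, hz, hN.adj_iff_of_adj_leaf hwz (hlow z hwz),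
    outdeg_eq_zero_iff.1 (hlow z hwz)⟩

@[simps]
def detachRetic (N : PNet) (w p₁ p₂ z ℓ : ℕ) : PNet where
  verts := insert p₁ (insert ℓ (insert p₂ (insert z (N.verts.erase w))))
  adj u v := (N.adj u v ∧ u ≠ w ∧ v ≠ w) ∨ (u = p₁ ∧ v = ℓ) ∨ (u = p₂ ∧ v = z)
  adjDec _ _ := inferInstance
  adj_mem u v := by
    rintro (⟨h, hu, hv⟩ | ⟨rfl, rfl⟩ | ⟨rfl, rfl⟩)
    · simp [hu, hv, mem_verts_of_adj_left h, mem_verts_of_adj_right h]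
    all_goals simp

namespace IsLeafRetic

theorem adj_parent₁ (h : N.IsLeafRetic w p₁ p₂ z) : N.adj p₁ w :=
  (h.adj_iff_parent p₁).2 (.inl rfl)

theorem adj_parent₂ (h : N.IsLeafRetic w p₁ p₂ z) : N.adj p₂ w :=
  (h.adj_iff_parent p₂).2 (.inr rfl)

theorem adj_child (h : N.IsLeafRetic w p₁ p₂ z) : N.adj w z := (h.adj_iff_child z).2 rfl

theorem hgt (h : N.IsLeafRetic w p₁ p₂ z) (hℓ : ℓ ∉ N.verts) (hs : s ∉ N.verts)
    (hsℓ : s ≠ ℓ) :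
    HGT (N.detachRetic w p₁ p₂ z ℓ) (N.graft h.adj_parent₁ s ℓ) := by
  have hmem := N.adj_mem
  have hp₁w := h.adj_parent₁
  have hp₂w := h.adj_parent₂
  have hwz := h.adj_child
  obtain ⟨hp, hpar, hch, hzpar, hz⟩ := h
  refine ⟨ℓ, z, s, w, p₁, p₂, by grind, ⟨by simp, outdeg_eq_zero_iff.2 ?_⟩,
    ⟨by simp, outdeg_eq_zero_iff.2 ?_⟩, by simp, by simp, ?_, ?_, by grind, ?_, ?_⟩
  · grind [detachRetic_adj]
  · grind [detachRetic_adj]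
  · grind [detachRetic_verts]
  · grind [detachRetic_verts]
  · ext
    grind [detachRetic_verts, graft_verts]
  · grind [detachRetic_adj, graft_adj]

theorem prunesAt (h : N.IsLeafRetic w p₁ p₂ z) (hN : N.IsBinaryAt ρ) (hℓ : ℓ ∉ N.verts) :
    (N.detachRetic w p₁ p₂ z ℓ).PrunesAt N ρ w := by
  have hmem := N.adj_mem
  have hp₁w := h.adj_parent₁
  have hp₂w := h.adj_parent₂
  have hwz := h.adj_child
  have := hN.isRoot.1
  have hzin : N.indeg z = 1 := indeg_eq_one_iff.2 ⟨w, h.adj_iff_leaf⟩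
  obtain ⟨hp, hpar, hch, hzpar, hz⟩ := h
  intro v hv
  obtain rfl | ⟨hvN, hvw⟩ : v = ℓ ∨ (v ∈ N.verts ∧ v ≠ w) := by grind [detachRetic_verts]
  · exact .inr ⟨by grind, indeg_eq_one_iff.2 ⟨p₁, fun u => by grind [detachRetic_adj]⟩,
      outdeg_eq_zero_iff.2 fun c => by grind [detachRetic_adj]⟩
  refine .inl ⟨hvN, hvw, ?_, ?_⟩
  · by_cases hvz : v = z
    · subst v
      exact hzin ▸ indeg_eq_one_iff.2 ⟨p₂, fun u => by grind [detachRetic_adj]⟩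
    · exact indeg_congr fun u => by grind [detachRetic_adj]
  · by_cases hv₁ : v = p₁
    · subst v
      exact outdeg_eq_of_replace_child (ℓ := ℓ) hp₁w (by grind)
        fun c => by grind [detachRetic_adj]
    by_cases hv₂ : v = p₂
    · subst v
      exact outdeg_eq_of_replace_child (ℓ := z) hp₂w (by grind)
        fun c => by grind [detachRetic_adj]
    · exact outdeg_congr fun c => by grind [detachRetic_adj]

theorem isBinaryAt_detachRetic (h : N.IsLeafRetic w p₁ p₂ z) (hN : N.IsBinaryAt ρ)
    (hℓ : ℓ ∉ N.verts) : (N.detachRetic w p₁ p₂ z ℓ).IsBinaryAt ρ := by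
  have hprune := h.prunesAt hN hℓ
  have hmem := N.adj_mem
  have hp₁w := h.adj_parent₁
  have hp₂w := h.adj_parent₂
  have hwz := h.adj_child
  have hρ := hN.isRoot
  rw [IsRoot, indeg_eq_zero_iff] at hρ
  obtain ⟨hp, hpar, hch, hzpar, hz⟩ := h
  have hsplit : ∀ v ∈ (N.detachRetic w p₁ p₂ z ℓ).verts,
      v = ℓ ∨ v = z ∨ (v ∈ N.verts ∧ v ≠ w ∧ v ≠ z) := by
    grind [detachRetic_verts]
  have hreach : ∀ v ∈ N.verts, v ≠ w → v ≠ z →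
      Relation.ReflTransGen (N.detachRetic w p₁ p₂ z ℓ).adj ρ v := fun v hv hvw hvz =>
    reflTransGen_of_closed (fun x => x = w ∨ x = z) (by grind) (by grind [detachRetic_adj])
      (hN.reach v hv) (by grind)
  refine hprune.isBinaryAt hN (hN.acyclic.of_adj ?_) (by grind [detachRetic_verts])
    fun v hv => ?_
  · rintro u v (⟨huv, -⟩ | ⟨rfl, rfl⟩ | ⟨rfl, rfl⟩)
    · exact .inl huv
    all_goals exact .inr fun c => by grind [detachRetic_adj]
  rcases hsplit v hv with hvℓ | hvz | ⟨hvN, hvw, hvz⟩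
  · subst v
    exact (hreach p₁ (by grind) (by grind) (by grind)).tail (by simp)
  · subst v
    exact (hreach p₂ (by grind) (by grind) (by grind)).tail (by simp)
  · exact hreach v hvN hvw hvz

end IsLeafRetic

theorem Iso.refl (N : PNet) : Iso N N := ⟨id, Set.bijOn_id _, fun _ _ _ _ => Iff.rfl⟩

def Event (A B : PNet) : Prop := Speciation A B ∨ HGT A B ∨ Extinct A B

theorem IsBinaryAt.exists_reduction (hN : N.IsBinaryAt ρ) :
    ∃ P, Relation.ReflTransGen Event P N ∧
      (SingleLeaf P ∨ P.IsBinary ∧ P.numInternal < N.numInternal) := by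
  obtain ⟨w, hw, hwo, hlow⟩ :=
    hN.acyclic.exists_lowest_internal hN.isRoot.1 (by rw [hN.outdeg_root]; norm_num)
  by_cases hw2 : N.outdeg w = 2
  · obtain ⟨a, b, hc⟩ := hN.exists_isCherry hw2 hlow
    refine ⟨_, .single (.inl hc.speciation), ?_⟩
    by_cases hwρ : w = ρ
    · subst hwρ
      exact .inl (hc.singleLeaf_deleteVerts hN)
    · exact .inr ⟨isBinary_iff.2 ⟨ρ, hc.isBinaryAt_deleteVerts hN hwρ⟩,
        (hc.prunesAt hN hwρ).numInternal_lt hw hwo⟩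
  · have hwρ : w ≠ ρ := fun e => hw2 (e ▸ hN.outdeg_root)
    obtain ⟨hwi, hwo'⟩ : N.indeg w = 2 ∧ N.outdeg w = 1 := by
      rcases hN.degrees w hw hwρ with h | h | h <;> omega
    obtain ⟨p₁, p₂, z, hr⟩ := hN.exists_isLeafRetic hwi hwo' hlow
    obtain ⟨ℓ, hℓ⟩ := Infinite.exists_notMem_finset N.verts
    obtain ⟨s, hs⟩ := Infinite.exists_notMem_finset (insert ℓ N.verts)
    rw [Finset.mem_insert, not_or] at hs
    exact ⟨_, .tail (.single (.inr (.inl (hr.hgt hℓ hs.2 hs.1))))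
        (.inr (.inr (extinct_graft _ hs.2 hℓ hs.1))),
      .inr ⟨isBinary_iff.2 ⟨ρ, hr.isBinaryAt_detachRetic hN hℓ⟩,
        (hr.prunesAt hN hℓ).numInternal_lt hw hwo⟩⟩

theorem IsBinary.exists_generation (hN : N.IsBinary) :
    ∃ N₀, SingleLeaf N₀ ∧ Relation.ReflTransGen Event N₀ N := by
  induction h : N.numInternal using Nat.strong_induction_on generalizing N with
  | _ n ih =>
    obtain ⟨ρ, hρ⟩ := isBinary_iff.1 hN
    obtain ⟨P, hPN, hP | ⟨hP, hlt⟩⟩ := hρ.exists_reduction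
    · exact ⟨P, hP, hPN⟩
    · obtain ⟨N₀, h₀, h₀P⟩ := ih _ (h ▸ hlt) hP rfl
      exact ⟨N₀, h₀, h₀P.trans hPN⟩

end PNet

open PNet in
/-- Any binary phylogenetic network can be generated (up to isomorphism) from
the single-leaf network by speciation, n-type (HGT) reticulation, and
extinction events. -/
theorem stmt14 (N : PNet) (hbin : N.IsBinary) :
    ∃ N₀ M, SingleLeaf N₀ ∧
      Relation.ReflTransGen
        (fun A B => Speciation A B ∨ HGT A B ∨ Extinct A B) N₀ M ∧
      Iso M N := by
  obtain ⟨N₀, h₀, hgen⟩ := hbin.exists_generation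
  exact ⟨N₀, N, h₀, hgen, Iso.refl N⟩
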